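/- arXiv:2410.09231 — 2 statements merged into one kernel-verified Lean document; each statement's English description precedes it below -/
import Mathlib

section
/- Define G(y,y',x) = (x/2)·D(y‖1/2) + y'·D(y/y' ‖ 2^{-(1-x)}) - D(y‖1/2) + (1/2)·D(y' ‖ 2^{-x}) and y_{(x)} = y + (1-y)(2^{1-x}-1). For y ∈ (0,1/2), the partial derivative ∂G/∂y' evaluated at y' = y_{(x)} satisfies: its limit as x → 1⁻ equals (1/2)·log((1-y)/y), its limit as x → 0⁺ equals (1/2)·log(2(1-y)), and it is increasing in x; hence sup over x ∈ (0,1) of its absolute value is (1/2)·log((1-y)/y) and the infimum is (1/2)·log(2(1-y)). -/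
/-- Two-point (Bernoulli) Kullback–Leibler divergence (natural log). -/
noncomputable def klBer (a b : ℝ) : ℝ :=
  a * Real.log (a / b) + (1 - a) * Real.log ((1 - a) / (1 - b))

/-- Binary entropy (base 2). -/
noncomputable def binEnt (x : ℝ) : ℝ := -x * Real.logb 2 x - (1 - x) * Real.logb 2 (1 - x)

/-- `y_{(x)} = y + (1-y)(2^{1-x} - 1)`. -/
noncomputable def yOf (y x : ℝ) : ℝ := y + (1 - y) * ((2 : ℝ) ^ (1 - x) - 1)

/-- The function `G(y, y', x)`. -/
noncomputable def Gfun (y y' x : ℝ) : ℝ :=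
  x / 2 * klBer y (1 / 2) + y' * klBer (y / y') ((2 : ℝ) ^ (-(1 - x)))
    - klBer y (1 / 2) + 1 / 2 * klBer y' ((2 : ℝ) ^ (-x))

/-- `Ğ(y,x) = G(y, y_{(x)}, x)`. -/
noncomputable def Gbr (y x : ℝ) : ℝ := Gfun y (yOf y x) x

set_option maxHeartbeats 1000000 in
lemma deriv_formula (y x : ℝ) (hy0 : 0 < y) (hy : y < 1/2) (hx0 : 0 < x) (hx1 : x < 1) :
    deriv (fun t => Gfun y t x) (yOf y x) =
      1/2 * Real.log ((1 - y) / yOf y x) + (1 - x)/2 * Real.log 2 := by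
  have hy1 : y < 1 := by linarith
  set c : ℝ := (2:ℝ) ^ (-x) with hc
  set u : ℝ := (2:ℝ) ^ (1-x) with hudef
  have hu1 : 1 < u := (Real.one_lt_rpow_iff_of_pos (by norm_num)).mpr
    (Or.inl ⟨one_lt_two, by linarith⟩)
  have hu2 : u < 2 := by
    have : ((2:ℝ) ^ ((1:ℝ)-x)) < 2 ^ (1:ℝ) :=
      (Real.rpow_lt_rpow_left_iff one_lt_two).mpr (by linarith)
    simpa [Real.rpow_one] using this
  have hc0 : 0 < c := Real.rpow_pos_of_pos (by norm_num) _
  have hc1 : c < 1 := Real.rpow_lt_one_of_one_lt_of_neg one_lt_two (by linarith)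
  have huc : u = 2 * c := by
    rw [hudef, hc, ← Real.rpow_one_add' (by norm_num) (by intro h; linarith)]
    ring_nf
  -- b = 2^(-(1-x)) = u⁻¹
  have hb : (2:ℝ) ^ (-(1-x)) = u⁻¹ := by
    rw [hudef, ← Real.rpow_neg (by norm_num)]
  set t₀ : ℝ := yOf y x with ht0def
  have ht0 : t₀ = y + (1-y)*(u-1) := rfl
  have ht0y : y < t₀ := by rw [ht0]; nlinarith
  have ht00 : 0 < t₀ := lt_trans hy0 ht0y
  have ht01 : t₀ < 1 := by rw [ht0]; nlinarith
  have hlogu : Real.log u = (1-x) * Real.log 2 := Real.log_rpow (by norm_num) _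
  have hlogc : Real.log c = -x * Real.log 2 := Real.log_rpow (by norm_num) _
  set A : ℝ := Real.log (1 - u⁻¹) with hA
  set B : ℝ := Real.log c with hB
  set C : ℝ := Real.log (1 - c) with hC
  set K : ℝ := klBer y (1/2) with hK
  set K1 : ℝ := x/2 * K - K + y * (Real.log y - Real.log u⁻¹) with hK1
  set g : ℝ → ℝ := fun t => K1 + y * (-Real.log t)
      + (t - y) * (Real.log (t - y) - Real.log t - A)
      + 1/2 * (t * (Real.log t - B)) + 1/2 * ((1 - t) * (Real.log (1 - t) - C)) with hg
  have hfg : (fun t => Gfun y t x) =ᶠ[nhds t₀] g := by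
    filter_upwards [Ioo_mem_nhds ht0y ht01] with t ht
    obtain ⟨hty, ht1⟩ := ht
    have ht0' : 0 < t := lt_trans hy0 hty
    have htp : 0 < t - y := by linarith
    have h1t : 0 < 1 - t := by linarith
    have hub : (0:ℝ) < 1 - u⁻¹ := by
      have : u⁻¹ < 1 := by exact inv_lt_one_of_one_lt₀ hu1
      linarith
    simp only [Gfun, klBer, hb, hg]
    have e1 : 1 - y / t = (t - y)/t := by field_simp
    have e2 : Real.log (y / t / u⁻¹) = Real.log y - Real.log t - Real.log u⁻¹ := by
      rw [Real.log_div (by positivity) (by positivity), Real.log_div (by positivity) (by positivity)]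
    have e3 : Real.log ((t-y)/t / (1 - u⁻¹)) = Real.log (t-y) - Real.log t - A := by
      rw [Real.log_div (div_ne_zero (ne_of_gt htp) (ne_of_gt ht0')) (ne_of_gt hub), Real.log_div (ne_of_gt htp) (ne_of_gt ht0'), hA]
    have e4 : Real.log (t / c) = Real.log t - B := Real.log_div (ne_of_gt ht0') (ne_of_gt hc0)
    have e5 : Real.log ((1-t)/(1-c)) = Real.log (1-t) - C := Real.log_div (ne_of_gt h1t) (by linarith)
    rw [e1, e2, e3, e4, e5, hK1, hK]
    simp only [klBer]
    field_simp
    ring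
  have hd : HasDerivAt g
      (0 + (y * (-t₀⁻¹))
        + ((1:ℝ) * (Real.log (t₀ - y) - Real.log t₀ - A) + (t₀ - y) * ((t₀-y)⁻¹ * 1 - t₀⁻¹))
        + 1/2 * ((1:ℝ) * (Real.log t₀ - B) + t₀ * t₀⁻¹)
        + 1/2 * ((0 - 1) * (Real.log (1 - t₀) - C) + (1 - t₀) * ((1-t₀)⁻¹ * (0-1)))) t₀ := by
    have l1 : HasDerivAt (fun t : ℝ => Real.log t) t₀⁻¹ t₀ := Real.hasDerivAt_log (ne_of_gt ht00)
    have l2 : HasDerivAt (fun t : ℝ => Real.log (t - y)) ((t₀-y)⁻¹ * 1) t₀ :=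
      (Real.hasDerivAt_log (by intro h; nlinarith)).comp t₀ ((hasDerivAt_id t₀).sub_const y)
    have l3 : HasDerivAt (fun t : ℝ => Real.log (1 - t)) ((1-t₀)⁻¹ * (0-1)) t₀ :=
      (Real.hasDerivAt_log (by intro h; nlinarith)).comp t₀
        ((hasDerivAt_const t₀ (1:ℝ)).sub (hasDerivAt_id t₀))
    exact ((((hasDerivAt_const t₀ K1).add ((l1.neg).const_mul y)).add
      (((hasDerivAt_id t₀).sub_const y).mul ((l2.sub l1).sub_const A))).add
      (((hasDerivAt_id t₀).mul (l1.sub_const B)).const_mul (1/2))).add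
      ((((hasDerivAt_const t₀ (1:ℝ)).sub (hasDerivAt_id t₀)).mul (l3.sub_const C)).const_mul (1/2))
  have hderiv := (hd.congr_of_eventuallyEq hfg).deriv
  rw [hderiv]
  -- now prove the value identity
  have htm : t₀ - y = (1-y) * (u - 1) := by rw [ht0]; ring
  have h1t0 : 1 - t₀ = 2 * (1-y) * (1-c) := by rw [ht0, huc]; ring
  have elog1 : Real.log (t₀ - y) = Real.log (1-y) + Real.log (u-1) := by
    rw [htm, Real.log_mul (by linarith) (by linarith)]
  have eA : A = Real.log (u-1) - (1-x) * Real.log 2 := by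
    rw [hA]
    have : 1 - u⁻¹ = (u-1)/u := by field_simp
    rw [this, Real.log_div (by linarith) (by linarith), hlogu]
  have e1t : Real.log (1 - t₀) = Real.log 2 + Real.log (1-y) + C := by
    rw [h1t0, hC, Real.log_mul (by linarith) (by linarith),
      Real.log_mul (by norm_num) (by linarith)]
  have elogdiv : Real.log ((1-y)/t₀) = Real.log (1-y) - Real.log t₀ :=
    Real.log_div (by linarith) (ne_of_gt ht00)
  rw [elog1, eA, e1t, elogdiv, hlogc]
  have hne : t₀ ≠ 0 := ne_of_gt ht00
  have hne2 : t₀ - y ≠ 0 := by linarith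
  have hne3 : (1:ℝ) - t₀ ≠ 0 := by linarith
  field_simp
  ring


noncomputable def hFun (y x : ℝ) : ℝ :=
  1/2 * Real.log ((1 - y) / yOf y x) + (1 - x)/2 * Real.log 2

section
variable {y : ℝ} (hy0 : 0 < y) (hy : y < 1/2)

lemma yOf_eq (x : ℝ) : yOf y x = (1-y) * (2:ℝ)^(1-x) - (1 - 2*y) := by
  unfold yOf; ring

lemma u_mem {x : ℝ} (hx0 : 0 < x) (hx1 : x < 1) :
    1 < (2:ℝ)^(1-x) ∧ (2:ℝ)^(1-x) < 2 := by
  constructor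
  · exact (Real.one_lt_rpow_iff_of_pos (by norm_num)).mpr (Or.inl ⟨one_lt_two, by linarith⟩)
  · have : ((2:ℝ) ^ ((1:ℝ)-x)) < 2 ^ (1:ℝ) :=
      (Real.rpow_lt_rpow_left_iff one_lt_two).mpr (by linarith)
    simpa [Real.rpow_one] using this

include hy0 hy in
lemma yOf_mem {x : ℝ} (hx0 : 0 < x) (hx1 : x < 1) : y < yOf y x ∧ yOf y x < 1 := by
  obtain ⟨hu1, hu2⟩ := u_mem hx0 hx1
  unfold yOf; constructor <;> nlinarith

include hy0 hy in
lemma hFun_eq {x : ℝ} (hx0 : 0 < x) (hx1 : x < 1) :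
    hFun y x = 1/2 * Real.log ((1-y) * (2:ℝ)^(1-x) / yOf y x) := by
  obtain ⟨ht0y, _⟩ := yOf_mem hy0 hy hx0 hx1
  have ht00 : 0 < yOf y x := lt_trans hy0 ht0y
  have hu0 : (0:ℝ) < (2:ℝ)^(1-x) := Real.rpow_pos_of_pos (by norm_num) _
  have h1y : (0:ℝ) < 1 - y := by linarith
  unfold hFun
  rw [Real.log_div (ne_of_gt h1y) (ne_of_gt ht00),
    Real.log_div (mul_ne_zero (ne_of_gt h1y) (ne_of_gt hu0)) (ne_of_gt ht00),
    Real.log_mul (ne_of_gt h1y) (ne_of_gt hu0),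
    Real.log_rpow (by norm_num)]
  ring

include hy0 hy in
lemma hFun_lt {x : ℝ} (hx0 : 0 < x) (hx1 : x < 1) :
    hFun y x < 1/2 * Real.log ((1-y)/y) := by
  obtain ⟨hu1, hu2⟩ := u_mem hx0 hx1
  obtain ⟨ht0y, _⟩ := yOf_mem hy0 hy hx0 hx1
  have ht00 : 0 < yOf y x := lt_trans hy0 ht0y
  set u := (2:ℝ)^(1-x)
  rw [hFun_eq hy0 hy hx0 hx1]
  have h1y : (0:ℝ) < 1 - y := by linarith
  have : (1-y) * u / yOf y x < (1-y)/y := by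
    rw [div_lt_div_iff₀ ht00 hy0, yOf_eq]
    nlinarith [mul_pos (mul_pos h1y (by linarith : (0:ℝ) < 1 - 2*y)) (by linarith : (0:ℝ) < u - 1)]
  have hlog := Real.log_lt_log (by positivity) this
  linarith

include hy0 hy in
lemma hFun_gt {x : ℝ} (hx0 : 0 < x) (hx1 : x < 1) :
    1/2 * Real.log (2*(1-y)) < hFun y x := by
  obtain ⟨hu1, hu2⟩ := u_mem hx0 hx1
  obtain ⟨ht0y, _⟩ := yOf_mem hy0 hy hx0 hx1
  have ht00 : 0 < yOf y x := lt_trans hy0 ht0y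
  set u := (2:ℝ)^(1-x)
  rw [hFun_eq hy0 hy hx0 hx1]
  have h1y : (0:ℝ) < 1 - y := by linarith
  have : 2*(1-y) < (1-y) * u / yOf y x := by
    rw [lt_div_iff₀ ht00, yOf_eq]
    nlinarith [mul_pos (mul_pos h1y (by linarith : (0:ℝ) < 1 - 2*y)) (by linarith : (0:ℝ) < 2 - u)]
  have hlog := Real.log_lt_log (by positivity) this
  linarith

include hy0 hy in
lemma hFun_pos {x : ℝ} (hx0 : 0 < x) (hx1 : x < 1) : 0 < hFun y x := by
  have h1 : 0 < 1/2 * Real.log (2*(1-y)) := by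
    have : Real.log (2*(1-y)) > 0 := Real.log_pos (by nlinarith)
    linarith
  exact lt_trans h1 (hFun_gt hy0 hy hx0 hx1)

include hy0 hy in
lemma hFun_mono : StrictMonoOn (hFun y) (Set.Ioo (0:ℝ) 1) := by
  rintro x1 ⟨h10, h11⟩ x2 ⟨h20, h21⟩ hlt
  obtain ⟨hu11, hu12⟩ := u_mem h10 h11
  obtain ⟨hu21, hu22⟩ := u_mem h20 h21
  obtain ⟨ht1y, _⟩ := yOf_mem hy0 hy h10 h11
  obtain ⟨ht2y, _⟩ := yOf_mem hy0 hy h20 h21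
  have ht10 : 0 < yOf y x1 := lt_trans hy0 ht1y
  have ht20 : 0 < yOf y x2 := lt_trans hy0 ht2y
  have h1y : (0:ℝ) < 1 - y := by linarith
  have hu : (2:ℝ)^(1-x2) < (2:ℝ)^(1-x1) :=
    (Real.rpow_lt_rpow_left_iff one_lt_two).mpr (by linarith)
  simp only [hFun_eq hy0 hy h10 h11, hFun_eq hy0 hy h20 h21]
  have key : (1-y) * (2:ℝ)^(1-x1) / yOf y x1 < (1-y) * (2:ℝ)^(1-x2) / yOf y x2 := by
    rw [div_lt_div_iff₀ ht10 ht20, yOf_eq, yOf_eq]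
    nlinarith [mul_pos (mul_pos h1y (by linarith : (0:ℝ) < 1 - 2*y))
      (by linarith : (0:ℝ) < (2:ℝ)^(1-x1) - (2:ℝ)^(1-x2))]
  have hlog := Real.log_lt_log (by positivity) key
  linarith

lemma yOf_cont : Continuous (yOf y) := by
  have h2 : Continuous fun x : ℝ => (2:ℝ)^(1-x) := by
    have : (fun x : ℝ => (2:ℝ)^(1-x)) = fun x => Real.exp (Real.log 2 * (1-x)) := by
      funext x; rw [Real.rpow_def_of_pos (by norm_num)]
    rw [this]; fun_prop
  unfold yOf
  exact continuous_const.add (continuous_const.mul (h2.sub continuous_const))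

lemma yOf_one : yOf y 1 = y := by simp [yOf]

lemma yOf_zero : yOf y 0 = 1 := by
  simp [yOf, Real.rpow_one]; ring

include hy0 hy in
lemma hFun_tendsto_one :
    Filter.Tendsto (hFun y) (nhdsWithin 1 (Set.Iio 1)) (nhds (1/2 * Real.log ((1-y)/y))) := by
  have hca : ContinuousAt (hFun y) 1 := by
    have h1 : ContinuousAt (fun x => (1-y) / yOf y x) 1 :=
      ContinuousAt.div continuousAt_const yOf_cont.continuousAt (by rw [yOf_one]; exact ne_of_gt hy0)
    have h2 : ContinuousAt (fun x => Real.log ((1-y) / yOf y x)) 1 := by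
      refine (Real.continuousAt_log ?_).comp h1
      rw [yOf_one]
      exact div_ne_zero (by linarith : (0:ℝ) < 1 - y).ne' (ne_of_gt hy0)
    exact (h2.const_mul _).add
      (((continuousAt_const.sub continuousAt_id).div_const 2).mul continuousAt_const)
  have this : Filter.Tendsto (hFun y) (nhdsWithin 1 (Set.Iio 1)) (nhds (hFun y 1)) :=
    hca.tendsto.mono_left nhdsWithin_le_nhds
  have hval : hFun y 1 = 1/2 * Real.log ((1-y)/y) := by
    unfold hFun; rw [yOf_one]; norm_num
  rw [hval] at this
  exact this

include hy0 hy in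
lemma hFun_tendsto_zero :
    Filter.Tendsto (hFun y) (nhdsWithin 0 (Set.Ioi 0)) (nhds (1/2 * Real.log (2*(1-y)))) := by
  have hca : ContinuousAt (hFun y) 0 := by
    have h1 : ContinuousAt (fun x => (1-y) / yOf y x) 0 :=
      ContinuousAt.div continuousAt_const yOf_cont.continuousAt (by rw [yOf_zero]; norm_num)
    have h2 : ContinuousAt (fun x => Real.log ((1-y) / yOf y x)) 0 := by
      refine (Real.continuousAt_log ?_).comp h1
      rw [yOf_zero]
      simp only [div_one]
      intro h; linarith
    exact (h2.const_mul _).add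
      (((continuousAt_const.sub continuousAt_id).div_const 2).mul continuousAt_const)
  have this : Filter.Tendsto (hFun y) (nhdsWithin 0 (Set.Ioi 0)) (nhds (hFun y 0)) :=
    hca.tendsto.mono_left nhdsWithin_le_nhds
  have hval : hFun y 0 = 1/2 * Real.log (2*(1-y)) := by
    unfold hFun
    rw [yOf_zero, div_one, Real.log_mul (by norm_num) (by intro h; linarith)]
    ring
  rw [hval] at this
  exact this

end


/-- Behavior of `∂G/∂y'` at `y' = y_{(x)}`: its limits as `x → 1⁻` and `x → 0⁺` are
`(1/2) log((1-y)/y)` and `(1/2) log(2(1-y))` respectively; it is increasing in `x`;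
hence `(1/2) log((1-y)/y)` is the supremum of its absolute value over `x ∈ (0,1)` and
`(1/2) log(2(1-y))` the infimum. -/
theorem Gfun_deriv_y'_bounds (y : ℝ) (hy0 : 0 < y) (hy : y < 1 / 2) :
    Filter.Tendsto (fun x => deriv (fun t => Gfun y t x) (yOf y x))
        (nhdsWithin 1 (Set.Iio 1)) (nhds (1 / 2 * Real.log ((1 - y) / y))) ∧
    Filter.Tendsto (fun x => deriv (fun t => Gfun y t x) (yOf y x))
        (nhdsWithin 0 (Set.Ioi 0)) (nhds (1 / 2 * Real.log (2 * (1 - y)))) ∧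
    StrictMonoOn (fun x => deriv (fun t => Gfun y t x) (yOf y x)) (Set.Ioo (0 : ℝ) 1) ∧
    IsLUB ((fun x => |deriv (fun t => Gfun y t x) (yOf y x)|) '' Set.Ioo (0 : ℝ) 1)
        (1 / 2 * Real.log ((1 - y) / y)) ∧
    IsGLB ((fun x => |deriv (fun t => Gfun y t x) (yOf y x)|) '' Set.Ioo (0 : ℝ) 1)
        (1 / 2 * Real.log (2 * (1 - y))) := by
  have hEq : ∀ x ∈ Set.Ioo (0:ℝ) 1, deriv (fun t => Gfun y t x) (yOf y x) = hFun y x := by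
    intro x hx
    rw [deriv_formula y x hy0 hy hx.1 hx.2]; rfl
  have hmem1 : ∀ᶠ x in nhdsWithin (1:ℝ) (Set.Iio 1), x ∈ Set.Ioo (0:ℝ) 1 := by
    filter_upwards [mem_nhdsWithin_of_mem_nhds (Ioi_mem_nhds (by norm_num : (0:ℝ) < 1)),
      self_mem_nhdsWithin] with x h1 h2
    exact ⟨h1, h2⟩
  have hmem0 : ∀ᶠ x in nhdsWithin (0:ℝ) (Set.Ioi 0), x ∈ Set.Ioo (0:ℝ) 1 := by
    filter_upwards [mem_nhdsWithin_of_mem_nhds (Iio_mem_nhds (by norm_num : (0:ℝ) < 1)),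
      self_mem_nhdsWithin] with x h1 h2
    exact ⟨h2, h1⟩
  have T1 : Filter.Tendsto (fun x => deriv (fun t => Gfun y t x) (yOf y x))
      (nhdsWithin 1 (Set.Iio 1)) (nhds (1 / 2 * Real.log ((1 - y) / y))) := by
    refine Filter.Tendsto.congr' ?_ (hFun_tendsto_one hy0 hy)
    filter_upwards [hmem1] with x hx
    exact (hEq x hx).symm
  have T0 : Filter.Tendsto (fun x => deriv (fun t => Gfun y t x) (yOf y x))
      (nhdsWithin 0 (Set.Ioi 0)) (nhds (1 / 2 * Real.log (2 * (1 - y)))) := by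
    refine Filter.Tendsto.congr' ?_ (hFun_tendsto_zero hy0 hy)
    filter_upwards [hmem0] with x hx
    exact (hEq x hx).symm
  refine ⟨T1, T0, ?_, ?_, ?_⟩
  · intro a ha b hb hab
    simp only
    rw [hEq a ha, hEq b hb]
    exact hFun_mono hy0 hy ha hb hab
  · constructor
    · rintro z ⟨x, hx, rfl⟩
      simp only
      rw [hEq x hx, abs_of_pos (hFun_pos hy0 hy hx.1 hx.2)]
      exact le_of_lt (hFun_lt hy0 hy hx.1 hx.2)
    · intro b hb
      refine le_of_tendsto T1 ?_
      filter_upwards [hmem1] with x hx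
      exact le_trans (le_abs_self _) (hb ⟨x, hx, rfl⟩)
  · constructor
    · rintro z ⟨x, hx, rfl⟩
      simp only
      rw [hEq x hx, abs_of_pos (hFun_pos hy0 hy hx.1 hx.2)]
      exact le_of_lt (hFun_gt hy0 hy hx.1 hx.2)
    · intro b hb
      refine ge_of_tendsto T0 ?_
      filter_upwards [hmem0] with x hx
      have h := hb ⟨x, hx, rfl⟩
      simp only at h ⊢
      rw [hEq x hx, abs_of_pos (hFun_pos hy0 hy hx.1 hx.2)] at h
      rw [hEq x hx]
      exact h
end

section
/- Consider g(y) = log(2)·((1-y)·(1 + (1/2)·log(y/(1-y))) - h₂(y)/2) on (0,1/2] (the limiting derivative Ğ'_y(1)). Then g(1/2) = 0, g(y) → -∞ as y → 0⁺, g'(y) satisfies g'(1/2) = 0 and g'(y) → +∞ as y → 0⁺, and g''(y) = (y - log 2)/(2(1-y)y²) < 0 for y ∈ (0,1/2]; consequently g(y) < 0 for all y ∈ (0,1/2). -/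
/-- The limiting derivative `Ğ'_y(1)` as a function of `y`. -/
noncomputable def gDer1 (y : ℝ) : ℝ :=
  Real.log 2 * ((1 - y) * (1 + 1 / 2 * Real.log (y / (1 - y))) - binEnt y / 2)

/-!
Through Mathlib's natural-log `binEntropy`, which is continuous on all of `ℝ`,
`g y = log 2 · (1 - y)(1 + ½ log (y / (1 - y))) - binEntropy y / 2`; hence `g → -∞` at `0⁺`,
carried by `log (y / (1 - y))`, and
`g' y = -log 2 + log 2 / (2y) + (1 - log 2)/2 · log (y / (1 - y))`.
Since `log 2 > 1/2`, the bound `log x ≥ 1 - 1/x` shows that the `1/y` term wins, so `g' → +∞`, and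
`g'' < 0` on `(0, 1/2]`. Thus `g'` decreases to `g'(1/2) = 0`, so `g' > 0` on `(0, 1/2)`, and `g`
increases to `g(1/2) = 0`.
-/

open Real Filter Set Topology

lemma half_lt_log_two : 1 / 2 < log 2 := by
  linarith [log_two_gt_d9]

lemma lt_right_of_hasDerivAt_pos {f f' : ℝ → ℝ} {a b x : ℝ}
    (hf : ∀ y ∈ Ioc a b, HasDerivAt f (f' y) y) (hf' : ∀ y ∈ Ioo a b, 0 < f' y)
    (hx : x ∈ Ioo a b) : f x < f b := by
  refine strictMonoOn_of_deriv_pos (convex_Ioc a b)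
    (fun y hy => (hf y hy).continuousAt.continuousWithinAt) (fun y hy => ?_)
    (Ioo_subset_Ioc_self hx) (right_mem_Ioc.2 (hx.1.trans hx.2)) hx.2
  rw [interior_Ioc] at hy
  rw [(hf y (Ioo_subset_Ioc_self hy)).deriv]
  exact hf' y hy

lemma tendsto_log_div_one_sub_nhdsGT_zero :
    Tendsto (fun y : ℝ => log (y / (1 - y))) (𝓝[>] 0) atBot := by
  refine tendsto_log_nhdsGT_zero.comp (tendsto_nhdsWithin_iff.2 ⟨?_, ?_⟩)
  · have : ContinuousAt (fun y : ℝ => y / (1 - y)) 0 := by fun_prop (disch := norm_num)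
    simpa using this.tendsto.mono_left nhdsWithin_le_nhds
  · filter_upwards [Ioo_mem_nhdsGT one_pos] with y hy using div_pos hy.1 (sub_pos.2 hy.2)

lemma hasDerivAt_log_div_one_sub {y : ℝ} (hy : y ∈ Ioo (0 : ℝ) 1) :
    HasDerivAt (fun y => log (y / (1 - y))) (1 / (y * (1 - y))) y := by
  have h1 : 1 - y ≠ 0 := (sub_pos.2 hy.2).ne'
  refine (((hasDerivAt_id' y).div ((hasDerivAt_id' y).const_sub 1) h1).log
    (div_pos hy.1 (sub_pos.2 hy.2)).ne').congr_deriv ?_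
  simp only [Pi.div_apply]
  field_simp
  ring

lemma binEnt_eq_binEntropy_div_log_two (x : ℝ) : binEnt x = binEntropy x / log 2 := by
  simp only [binEnt, binEntropy, logb, log_inv]
  ring

lemma gDer1_eq_binEntropy (y : ℝ) :
    gDer1 y = log 2 * ((1 - y) * (1 + 1 / 2 * log (y / (1 - y)))) - binEntropy y / 2 := by
  have : log 2 ≠ 0 := (log_pos one_lt_two).ne'
  rw [gDer1, binEnt_eq_binEntropy_div_log_two]
  field_simp

lemma gDer1_half : gDer1 (1 / 2) = 0 := by
  rw [gDer1_eq_binEntropy, one_div, binEntropy_two_inv]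
  norm_num
  ring

lemma tendsto_gDer1_nhdsGT_zero : Tendsto gDer1 (𝓝[>] 0) atBot := by
  have hfactor : Tendsto (fun y : ℝ => 1 - y) (𝓝[>] 0) (𝓝 1) := by
    have : ContinuousAt (fun y : ℝ => 1 - y) 0 := by fun_prop
    simpa using this.tendsto.mono_left nhdsWithin_le_nhds
  have hentropy : Tendsto (fun y => -(binEntropy y / 2)) (𝓝[>] 0) (𝓝 (-(binEntropy 0 / 2))) :=
    ((binEntropy_continuous.div_const 2).neg.tendsto 0).mono_left nhdsWithin_le_nhds
  have hlog : Tendsto (fun y : ℝ => 1 + 1 / 2 * log (y / (1 - y))) (𝓝[>] 0) atBot :=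
    tendsto_atBot_add_const_left _ _
      (tendsto_log_div_one_sub_nhdsGT_zero.const_mul_atBot one_half_pos)
  have := ((hfactor.pos_mul_atBot one_pos hlog).const_mul_atBot (log_pos one_lt_two)).atBot_add
    hentropy
  refine this.congr fun y => ?_
  rw [gDer1_eq_binEntropy]
  ring

noncomputable def gDer1Deriv (y : ℝ) : ℝ :=
  -log 2 + log 2 / 2 * y⁻¹ + (1 - log 2) / 2 * log (y / (1 - y))

lemma hasDerivAt_gDer1 {y : ℝ} (hy : y ∈ Ioo (0 : ℝ) 1) :
    HasDerivAt gDer1 (gDer1Deriv y) y := by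
  have h1 : 1 - y ≠ 0 := (sub_pos.2 hy.2).ne'
  have hfactor : HasDerivAt (fun y : ℝ => 1 - y) (-1) y := by
    simpa using (hasDerivAt_id y).const_sub 1
  rw [show gDer1 = _ from funext gDer1_eq_binEntropy]
  refine (((hfactor.mul (((hasDerivAt_log_div_one_sub hy).const_mul (1 / 2)).const_add 1)).const_mul
    (log 2)).sub ((hasDerivAt_binEntropy hy.1.ne' hy.2.ne).div_const 2)).congr_deriv ?_
  rw [gDer1Deriv, log_div hy.1.ne' h1]
  field_simp
  ring

lemma hasDerivAt_gDer1Deriv {y : ℝ} (hy : y ∈ Ioo (0 : ℝ) 1) :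
    HasDerivAt gDer1Deriv ((y - log 2) / (2 * (1 - y) * y ^ 2)) y := by
  have h1 : 1 - y ≠ 0 := (sub_pos.2 hy.2).ne'
  refine (((hasDerivAt_inv hy.1.ne').const_mul (log 2 / 2)).const_add (-log 2)).add
    ((hasDerivAt_log_div_one_sub hy).const_mul ((1 - log 2) / 2)) |>.congr_deriv ?_
  field_simp
  ring

lemma deriv_gDer1 {y : ℝ} (hy : y ∈ Ioo (0 : ℝ) 1) : deriv gDer1 y = gDer1Deriv y :=
  (hasDerivAt_gDer1 hy).deriv

lemma deriv_deriv_gDer1 {y : ℝ} (hy : y ∈ Ioo (0 : ℝ) 1) :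
    deriv (deriv gDer1) y = (y - log 2) / (2 * (1 - y) * y ^ 2) := by
  have : deriv gDer1 =ᶠ[𝓝 y] gDer1Deriv :=
    eventually_of_mem (Ioo_mem_nhds hy.1 hy.2) fun z hz => deriv_gDer1 hz
  rw [this.deriv_eq, (hasDerivAt_gDer1Deriv hy).deriv]

lemma gDer1Deriv_half : gDer1Deriv (1 / 2) = 0 := by
  norm_num [gDer1Deriv]

lemma mul_inv_sub_two_le_gDer1Deriv {y : ℝ} (hy : y ∈ Ioo (0 : ℝ) 1) :
    (2 * log 2 - 1) / 2 * (y⁻¹ - 2) ≤ gDer1Deriv y := by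
  have hlog : 2 - y⁻¹ ≤ log (y / (1 - y)) := by
    convert one_sub_inv_le_log_of_pos (div_pos hy.1 (sub_pos.2 hy.2)) using 1
    field_simp [hy.1.ne']
    ring
  have hcoef : 0 ≤ (1 - log 2) / 2 := by linarith [log_two_lt_d9]
  calc (2 * log 2 - 1) / 2 * (y⁻¹ - 2)
      = -log 2 + log 2 / 2 * y⁻¹ + (1 - log 2) / 2 * (2 - y⁻¹) := by ring
    _ ≤ gDer1Deriv y := by rw [gDer1Deriv]; gcongr

lemma tendsto_gDer1Deriv_nhdsGT_zero : Tendsto gDer1Deriv (𝓝[>] 0) atTop := by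
  have hcoef : 0 < (2 * log 2 - 1) / 2 := by linarith [half_lt_log_two]
  refine tendsto_atTop_mono' _ ?_
    ((tendsto_atTop_add_const_right _ (-2) tendsto_inv_nhdsGT_zero).const_mul_atTop hcoef)
  filter_upwards [Ioo_mem_nhdsGT one_pos] with y hy
  simpa only [← sub_eq_add_neg] using mul_inv_sub_two_le_gDer1Deriv hy

lemma Ioc_zero_half_subset_Ioo : Ioc (0 : ℝ) (1 / 2) ⊆ Ioo 0 1 :=
  fun _ hy => ⟨hy.1, hy.2.trans_lt one_half_lt_one⟩

lemma sub_log_two_div_neg {y : ℝ} (hy : y ∈ Ioc (0 : ℝ) (1 / 2)) :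
    (y - log 2) / (2 * (1 - y) * y ^ 2) < 0 := by
  have h1 : 0 < 1 - y := by linarith [hy.2]
  exact div_neg_of_neg_of_pos (by linarith [hy.2, half_lt_log_two]) (by positivity [hy.1])

lemma gDer1Deriv_pos {y : ℝ} (hy : y ∈ Ioo (0 : ℝ) (1 / 2)) : 0 < gDer1Deriv y := by
  have := lt_right_of_hasDerivAt_pos
    (fun z hz => (hasDerivAt_gDer1Deriv (Ioc_zero_half_subset_Ioo hz)).neg)
    (fun z hz => neg_pos.2 (sub_log_two_div_neg (Ioo_subset_Ioc_self hz))) hy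
  simpa only [Pi.neg_apply, gDer1Deriv_half, neg_zero, neg_lt_zero] using this

lemma gDer1_neg {y : ℝ} (hy : y ∈ Ioo (0 : ℝ) (1 / 2)) : gDer1 y < 0 := by
  have := lt_right_of_hasDerivAt_pos (fun z hz => hasDerivAt_gDer1 (Ioc_zero_half_subset_Ioo hz))
    (fun z hz => gDer1Deriv_pos hz) hy
  rwa [gDer1_half] at this

/-- Properties of `g(y) = log 2 ((1-y)(1 + (1/2) log(y/(1-y))) - h₂(y)/2)`: it vanishes
at `1/2`, tends to `-∞` as `y → 0⁺`, has vanishing derivative at `1/2` and derivative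
tending to `+∞` as `y → 0⁺`, has negative second derivative on `(0,1/2]`, and is negative
on `(0,1/2)`. -/
theorem gDer1_properties :
    gDer1 (1 / 2) = 0 ∧
    Filter.Tendsto gDer1 (nhdsWithin 0 (Set.Ioi 0)) Filter.atBot ∧
    deriv gDer1 (1 / 2) = 0 ∧
    Filter.Tendsto (fun y => deriv gDer1 y) (nhdsWithin 0 (Set.Ioi 0)) Filter.atTop ∧
    (∀ y ∈ Set.Ioc (0 : ℝ) (1 / 2),
      deriv (deriv gDer1) y = (y - Real.log 2) / (2 * (1 - y) * y ^ 2) ∧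
      deriv (deriv gDer1) y < 0) ∧
    (∀ y ∈ Set.Ioo (0 : ℝ) (1 / 2), gDer1 y < 0) := by
  refine ⟨gDer1_half, tendsto_gDer1_nhdsGT_zero, ?_, ?_, fun y hy => ?_, fun _ => gDer1_neg⟩
  · rw [deriv_gDer1 (by norm_num), gDer1Deriv_half]
  · refine tendsto_gDer1Deriv_nhdsGT_zero.congr' ?_
    filter_upwards [Ioo_mem_nhdsGT one_pos] with y hy using (deriv_gDer1 hy).symm
  · rw [deriv_deriv_gDer1 (Ioc_zero_half_subset_Ioo hy)]
    exact ⟨rfl, sub_log_two_div_neg hy⟩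
end
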